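/- arXiv:2208.02922 — 6 statements merged into one kernel-verified Lean document; each statement's English description precedes it below -/
import Mathlib

section
/- Let p ∈ (0,1), let r > 0, and let T > 1 be a real number. Define f(β) = (r + β)·(1 − (1−p)^{T/β})/p for β ∈ [1, T]. Then the minimum of f over [1, T] is attained at β = 1 or at β = T; moreover, setting ρ = (pT + (1−p)^T − 1)/(1 − p − (1−p)^T): if r < ρ then β = 1 is the unique minimizer; if r > ρ then β = T is the unique minimizer; and if r = ρ then both β = 1 and β = T are minimizers. -/
/-!
Write `A β = 1 - (1 - p) ^ (T / β) = 1 - exp (c / β)` with `c = T log (1 - p) < 0`, so that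
`f β = (r + β) A β / p`. The function `1 / A` is convex on `(0, ∞)`: its second derivative is
nonnegative because `tanh u ≤ u` for `u ≥ 0`. So `1 / A` lies below its chord over `[1, T]`,
which bounds `f` from below by a linear-fractional function of `β` agreeing with `f` at both
endpoints. That function is monotone, increasing or decreasing according to the sign of
`ρ - r`, so it attains its minimum at an endpoint, hence so does `f`.
-/

open Real Set

theorem Real.two_mul_one_sub_exp_neg_le {t : ℝ} (ht : 0 ≤ t) :
    2 * (1 - exp (-t)) ≤ t * (1 + exp (-t)) := by
  let F : ℝ → ℝ := fun s => s * (1 + exp (-s)) - 2 * (1 - exp (-s))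
  have hF : ∀ s, HasDerivAt F (1 - exp (-s) * (1 + s)) s := fun s => by
    have he : HasDerivAt (fun s => exp (-s)) (-exp (-s)) s := by
      simpa using (hasDerivAt_neg s).exp
    refine (((hasDerivAt_id s).mul (he.const_add 1)).sub
      ((he.const_sub 1).const_mul 2)).congr_deriv ?_
    simp only [id]
    ring
  have hF' : ∀ s, 0 ≤ 1 - exp (-s) * (1 + s) := fun s => by
    have := mul_le_mul_of_nonneg_left (add_one_le_exp s) (exp_pos (-s)).le
    rw [← exp_add, neg_add_cancel, exp_zero] at this
    linarith
  have := monotone_of_hasDerivAt_nonneg hF hF' ht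
  simp only [F, neg_zero, exp_zero] at this
  linarith

section ExpDiv

variable {c x : ℝ}

theorem hasDerivAt_exp_div (hx : x ≠ 0) :
    HasDerivAt (fun y => exp (c / y)) (-c * exp (c / x) / x ^ 2) x := by
  simp only [div_eq_mul_inv c]
  refine ((hasDerivAt_inv hx).const_mul c).exp.congr_deriv ?_
  ring

theorem one_sub_exp_div_ne_zero (hc : c ≠ 0) (hx : x ≠ 0) : 1 - exp (c / x) ≠ 0 :=
  sub_ne_zero.2 fun h => div_ne_zero hc hx ((exp_eq_one_iff _).1 h.symm)

theorem hasDerivAt_inv_one_sub_exp_div (hc : c ≠ 0) (hx : x ≠ 0) :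
    HasDerivAt (fun y => (1 - exp (c / y))⁻¹)
      (-c * exp (c / x) / (x ^ 2 * (1 - exp (c / x)) ^ 2)) x := by
  have hne := one_sub_exp_div_ne_zero hc hx
  refine (((hasDerivAt_exp_div hx).const_sub 1).inv hne).congr_deriv ?_
  field_simp

theorem hasDerivAt_deriv_inv_one_sub_exp_div (hc : c ≠ 0) (hx : x ≠ 0) :
    HasDerivAt (fun y => -c * exp (c / y) / (y ^ 2 * (1 - exp (c / y)) ^ 2))
      (-c * exp (c / x) * (-c * (1 + exp (c / x)) - 2 * x * (1 - exp (c / x)))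
        / (x ^ 4 * (1 - exp (c / x)) ^ 3)) x := by
  have hne := one_sub_exp_div_ne_zero hc hx
  have hden : HasDerivAt (fun y => y ^ 2 * (1 - exp (c / y)) ^ 2)
      (2 * x * (1 - exp (c / x)) ^ 2
        + x ^ 2 * (2 * (1 - exp (c / x)) * (c * exp (c / x) / x ^ 2))) x := by
    refine ((hasDerivAt_pow 2 x).mul (((hasDerivAt_exp_div hx).const_sub 1).pow 2)).congr_deriv ?_
    norm_num
    ring
  refine (((hasDerivAt_exp_div (c := c) hx).const_mul (-c)).div hden
    (mul_ne_zero (pow_ne_zero 2 hx) (pow_ne_zero 2 hne))).congr_deriv ?_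
  field_simp
  ring

theorem convexOn_inv_one_sub_exp_div (hc : c < 0) :
    ConvexOn ℝ (Ioi 0) fun x => (1 - exp (c / x))⁻¹ := by
  refine convexOn_of_hasDerivWithinAt2_nonneg (convex_Ioi 0)
    (fun x hx => (hasDerivAt_inv_one_sub_exp_div hc.ne
      (ne_of_gt hx)).continuousAt.continuousWithinAt)
    (fun x hx => (hasDerivAt_inv_one_sub_exp_div hc.ne
      (ne_of_gt (interior_subset hx))).hasDerivWithinAt)
    (fun x hx => (hasDerivAt_deriv_inv_one_sub_exp_div hc.ne
      (ne_of_gt (interior_subset hx))).hasDerivWithinAt)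
    fun x hx => ?_
  have hx : 0 < x := interior_subset hx
  have hE : 0 < 1 - exp (c / x) := sub_pos.2 (exp_lt_one_iff.2 (div_neg_of_neg_of_pos hc hx))
  have hkey : 2 * x * (1 - exp (c / x)) ≤ -c * (1 + exp (c / x)) := by
    have := mul_le_mul_of_nonneg_left
      (two_mul_one_sub_exp_neg_le (div_nonneg (neg_nonneg.2 hc.le) hx.le)) hx.le
    rw [neg_div, neg_neg, ← mul_assoc, ← mul_assoc, mul_neg, mul_div_cancel₀ c hx.ne'] at this
    linarith
  refine div_nonneg (mul_nonneg (mul_nonneg (neg_nonneg.2 hc.le) (exp_pos _).le) ?_) (by positivity)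
  linarith

end ExpDiv

theorem convexOn_inv_one_sub_rpow_div {q T : ℝ} (hq0 : 0 < q) (hq1 : q < 1) (hT : 0 < T) :
    ConvexOn ℝ (Ioi 0) fun x => (1 - q ^ (T / x))⁻¹ := by
  convert convexOn_inv_one_sub_exp_div (mul_neg_of_pos_of_neg hT (log_neg hq0 hq1)) using 4 with x
  rw [rpow_def_of_pos hq0, mul_div_assoc', mul_comm]

section OrderedField

variable {𝕜 : Type*} [Field 𝕜] [LinearOrder 𝕜] [IsStrictOrderedRing 𝕜]

theorem ConvexOn.sub_mul_le_of_mem_Icc {s : Set 𝕜} {f : 𝕜 → 𝕜} {x y z : 𝕜}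
    (hf : ConvexOn 𝕜 s f) (hx : x ∈ s) (hz : z ∈ s) (hy : y ∈ Icc x z) :
    (z - x) * f y ≤ (z - y) * f x + (y - x) * f z := by
  rcases hy.1.eq_or_lt with rfl | hxy
  · simp
  rcases hy.2.eq_or_lt with rfl | hyz
  · simp
  exact hf.secant_mono_aux1 hx hz hxy hyz

theorem ConvexOn.sub_mul_mul_le_of_inv {A : 𝕜 → 𝕜} {x y z : 𝕜}
    (hf : ConvexOn 𝕜 (Icc x z) fun t => (A t)⁻¹) (hA : ∀ t ∈ Icc x z, 0 < A t)
    (hy : y ∈ Icc x z) :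
    (z - x) * A x * A z ≤ A y * ((z - y) * A z + (y - x) * A x) := by
  have hxz : x ≤ z := hy.1.trans hy.2
  have hAx := hA x (left_mem_Icc.2 hxz)
  have hAy := hA y hy
  have hAz := hA z (right_mem_Icc.2 hxz)
  have hchord := hf.sub_mul_le_of_mem_Icc (left_mem_Icc.2 hxz) (right_mem_Icc.2 hxz) hy
  have hcleared : A y * ((z - y) * A z + (y - x) * A x) - (z - x) * A x * A z
      = A x * A y * A z * ((z - y) * (A x)⁻¹ + (y - x) * (A z)⁻¹ - (z - x) * (A y)⁻¹) := by
    field_simp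
  rw [← sub_nonneg, hcleared]
  exact mul_nonneg (by positivity) (sub_nonneg.2 hchord)

variable {a b c r β T ρ : 𝕜}

theorem left_endpoint_le_of_chord (ha : 0 < a) (hab : b < a) (hβ : 1 ≤ β)
    (hD : 0 < (T - β) * b + (β - 1) * a) (hr : 0 ≤ r + β) (hρ : ρ * (a - b) = T * b - a)
    (hc : (T - 1) * a * b ≤ c * ((T - β) * b + (β - 1) * a)) :
    (r ≤ ρ → (r + 1) * a ≤ (r + β) * c) ∧
      (r < ρ → 1 < β → (r + 1) * a < (r + β) * c) := by
  have hgap : a * (a - b) * ((β - 1) * (ρ - r))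
      ≤ ((T - β) * b + (β - 1) * a) * ((r + β) * c - (r + 1) * a) := by
    linear_combination (r + β) * hc + a * (β - 1) * hρ
  have hpos : 0 < a * (a - b) := mul_pos ha (sub_pos.2 hab)
  refine ⟨fun h => ?_, fun h h1 => ?_⟩
  · exact sub_nonneg.1 (nonneg_of_mul_nonneg_right
      ((mul_nonneg hpos.le (mul_nonneg (sub_nonneg.2 hβ) (sub_nonneg.2 h))).trans hgap) hD)
  · exact sub_pos.1 (pos_of_mul_pos_right
      ((mul_pos hpos (mul_pos (sub_pos.2 h1) (sub_pos.2 h))).trans_le hgap) hD.le)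

theorem right_endpoint_le_of_chord (hb : 0 < b) (hab : b < a) (hβ : β ≤ T)
    (hD : 0 < (T - β) * b + (β - 1) * a) (hr : 0 ≤ r + β) (hρ : ρ * (a - b) = T * b - a)
    (hc : (T - 1) * a * b ≤ c * ((T - β) * b + (β - 1) * a)) :
    (ρ ≤ r → (r + T) * b ≤ (r + β) * c) ∧
      (ρ < r → β < T → (r + T) * b < (r + β) * c) := by
  have hgap : b * (a - b) * ((T - β) * (r - ρ))
      ≤ ((T - β) * b + (β - 1) * a) * ((r + β) * c - (r + T) * b) := by
    linear_combination (r + β) * hc - b * (T - β) * hρ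
  have hpos : 0 < b * (a - b) := mul_pos hb (sub_pos.2 hab)
  refine ⟨fun h => ?_, fun h hT => ?_⟩
  · exact sub_nonneg.1 (nonneg_of_mul_nonneg_right
      ((mul_nonneg hpos.le (mul_nonneg (sub_nonneg.2 hβ) (sub_nonneg.2 h))).trans hgap) hD)
  · exact sub_pos.1 (pos_of_mul_pos_right
      ((mul_pos hpos (mul_pos (sub_pos.2 hT) (sub_pos.2 h))).trans_le hgap) hD.le)

theorem endpoint_minimizers_of_convexOn_inv {A f : 𝕜 → 𝕜} (hT : 1 < T) (hr : 0 ≤ r + 1)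
    (hA : ∀ x ∈ Icc 1 T, 0 < A x) (hconv : ConvexOn 𝕜 (Icc 1 T) fun x => (A x)⁻¹)
    (hlt : A T < A 1) (hf : ∀ β, f β = (r + β) * A β)
    (hρ : ρ * (A 1 - A T) = T * A T - A 1) :
    (∀ β ∈ Icc 1 T, min (f 1) (f T) ≤ f β) ∧
    (r < ρ → ∀ β ∈ Icc 1 T, β ≠ 1 → f 1 < f β) ∧
    (ρ < r → ∀ β ∈ Icc 1 T, β ≠ T → f T < f β) ∧
    (r = ρ → f 1 = f T ∧ ∀ β ∈ Icc 1 T, f 1 ≤ f β) := by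
  have h1 : (1 : 𝕜) ∈ Icc 1 T := left_mem_Icc.2 hT.le
  have hT' : T ∈ Icc 1 T := right_mem_Icc.2 hT.le
  have hb := hA T hT'
  have hD : ∀ β ∈ Icc 1 T, 0 < (T - β) * A T + (β - 1) * A 1 := fun β hβ => by
    nlinarith [hβ.1, hβ.2]
  have hleft :
      ∀ β ∈ Icc 1 T, (r ≤ ρ → f 1 ≤ f β) ∧ (r < ρ → 1 < β → f 1 < f β) :=
    fun β hβ => by
      simpa only [hf] using left_endpoint_le_of_chord (hb.trans hlt) hlt hβ.1 (hD β hβ)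
        (by linarith [hβ.1]) hρ (hconv.sub_mul_mul_le_of_inv hA hβ)
  have hright :
      ∀ β ∈ Icc 1 T, (ρ ≤ r → f T ≤ f β) ∧ (ρ < r → β < T → f T < f β) :=
    fun β hβ => by
      simpa only [hf] using right_endpoint_le_of_chord hb hlt hβ.2 (hD β hβ)
        (by linarith [hβ.1]) hρ (hconv.sub_mul_mul_le_of_inv hA hβ)
  refine ⟨fun β hβ => ?_, fun h β hβ hne => (hleft β hβ).2 h (hβ.1.lt_of_ne hne.symm),
    fun h β hβ hne => (hright β hβ).2 h (hβ.2.lt_of_ne hne),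
    fun h => ⟨((hleft T hT').1 h.le).antisymm ((hright 1 h1).1 h.ge),
      fun β hβ => (hleft β hβ).1 h.le⟩⟩
  rcases le_total r ρ with h | h
  exacts [(min_le_left _ _).trans ((hleft β hβ).1 h),
    (min_le_right _ _).trans ((hright β hβ).1 h)]

end OrderedField

/-- The minimum of the expected-cost function
`f β = (r + β) * (1 - (1-p)^(T/β)) / p` over `[1, T]` is attained at `β = 1` or
`β = T`; moreover, with `ρ = (p*T + (1-p)^T - 1) / (1 - p - (1-p)^T)`:
if `r < ρ` then `β = 1` is the unique minimizer, if `r > ρ` then `β = T` is the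
unique minimizer, and if `r = ρ` then both endpoints are minimizers. -/
theorem ace_optimal_interval (p r T : ℝ) (hp0 : 0 < p) (hp1 : p < 1)
    (hr : 0 < r) (hT : 1 < T)
    (f : ℝ → ℝ) (hf : ∀ β, f β = (r + β) * (1 - (1 - p) ^ (T / β)) / p)
    (ρ : ℝ) (hρ : ρ = (p * T + (1 - p) ^ T - 1) / (1 - p - (1 - p) ^ T)) :
    (∀ β ∈ Set.Icc (1 : ℝ) T, min (f 1) (f T) ≤ f β) ∧
    (r < ρ → ∀ β ∈ Set.Icc (1 : ℝ) T, β ≠ 1 → f 1 < f β) ∧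
    (ρ < r → ∀ β ∈ Set.Icc (1 : ℝ) T, β ≠ T → f T < f β) ∧
    (r = ρ → f 1 = f T ∧ ∀ β ∈ Set.Icc (1 : ℝ) T, f 1 ≤ f β) := by
  have hq0 : 0 < 1 - p := by linarith
  have hq1 : 1 - p < 1 := by linarith
  have hqT : (1 - p) ^ T < 1 - p := rpow_lt_self_of_lt_one hq0 hq1 hT
  have hT0 : 0 < T := by linarith
  have hden : 1 - p - (1 - p) ^ T ≠ 0 := by linarith
  refine endpoint_minimizers_of_convexOn_inv (r := r)
    (A := fun β => (1 - (1 - p) ^ (T / β)) / p) hT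
    (by linarith) (fun x hx => ?_) ?_ ?_ (fun β => by rw [hf, mul_div_assoc]) ?_
  · exact div_pos (sub_pos.2 (rpow_lt_one hq0.le hq1 (div_pos hT0 (by linarith [hx.1])))) hp0
  · have := ((convexOn_inv_one_sub_rpow_div hq0 hq1 hT0).subset
      (fun x hx => mem_Ioi.2 (by linarith [hx.1])) (convex_Icc 1 T)).smul hp0.le
    simp only [inv_div]
    simpa only [div_eq_mul_inv, smul_eq_mul] using this
  · simp only [div_one, div_self hT0.ne', rpow_one]
    rw [div_lt_div_iff_of_pos_right hp0]
    linarith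
  · simp only [div_one, div_self hT0.ne', rpow_one]
    rw [hρ]
    field_simp
    ring
end

section
/- Let p ∈ (0,1), let r > 0, and let T > 1 be a real number. Define f(β) = (r + β)·(1 − (1−p)^{T/β})/p for β ∈ [1, T]. Then for every β ∈ [1, T], f(β) ≥ min(f(1), f(T)); that is, the minimum of f over the interval [1, T] is attained at one of the two endpoints β = 1 or β = T. -/
open Real Set

/-!
With `a = -T log (1 - p) > 0` we have `p f(β) = g(β) := (r + β) (1 - exp (-a / β))`, and
`g''(x) = exp (-a / x) a x⁻⁴ (2 r x - a (r + x))`. Since `2 r x - a (r + x)` has the sign of the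
increasing function `2 r - a - a r / x`, there is a `t ∈ [1, T]` with `g` concave on `[1, t]` and
`2 r x ≥ a (r + x)` on `[t, T]`. There `u = a / x` satisfies `u (r + x) ≤ 2 r`, and `g'(x) < 0`
reduces to the Padé-type bound `(2 - u) eᵘ < 2 + u`, so `g` decreases on `[t, T]`. A function
concave on `[1, t]` and antitone on `[t, T]` attains its minimum over `[1, T]` at an endpoint.
-/

lemma two_sub_mul_exp_lt_two_add {u : ℝ} (hu : 0 < u) : (2 - u) * exp u < 2 + u := by
  have hderiv (y : ℝ) :
      HasDerivAt (fun y ↦ 2 + y - (2 - y) * exp y) (1 - (1 - y) * exp y) y := by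
    refine (((hasDerivAt_id' y).const_add 2).sub
      (((hasDerivAt_id' y).const_sub 2).mul (hasDerivAt_exp y))).congr_deriv ?_
    ring
  have hderiv_pos (y : ℝ) (hy : 0 < y) : 0 < 1 - (1 - y) * exp y := by
    have h : 1 - y < exp (-y) := by linarith [add_one_lt_exp (neg_ne_zero.2 hy.ne')]
    have := mul_lt_mul_of_pos_right h (exp_pos y)
    rw [← exp_add, neg_add_cancel, exp_zero] at this
    linarith
  have hmono : StrictMonoOn (fun y ↦ 2 + y - (2 - y) * exp y) (Ici 0) :=
    strictMonoOn_of_hasDerivWithinAt_pos (convex_Ici 0)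
      (fun y _ ↦ (hderiv y).continuousAt.continuousWithinAt)
      (fun y _ ↦ (hderiv y).hasDerivWithinAt)
      (fun y hy ↦ hderiv_pos y (by simpa using hy))
  have := hmono self_mem_Ici hu.le hu
  simp only [sub_zero, add_zero, exp_zero, mul_one] at this
  linarith

lemma min_le_of_concaveOn_of_antitoneOn {f : ℝ → ℝ} {a t b x : ℝ} (hat : a ≤ t) (htb : t ≤ b)
    (hconc : ConcaveOn ℝ (Icc a t) f) (hanti : AntitoneOn f (Icc t b)) (hx : x ∈ Icc a b) :
    min (f a) (f b) ≤ f x := by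
  rcases le_total x t with hxt | htx
  · calc min (f a) (f b) ≤ min (f a) (f t) :=
          min_le_min_left _ (hanti (left_mem_Icc.2 htb) (right_mem_Icc.2 htb) htb)
      _ ≤ f x := hconc.min_le_of_mem_Icc (left_mem_Icc.2 hat) (right_mem_Icc.2 hat) ⟨hx.1, hxt⟩
  · exact (min_le_right _ _).trans (hanti ⟨htx, hx.2⟩ (right_mem_Icc.2 htb) hx.2)

lemma MonotoneOn.exists_nonpos_nonneg {φ : ℝ → ℝ} {a b : ℝ} (hab : a ≤ b)
    (hφ : MonotoneOn φ (Icc a b)) :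
    ∃ t ∈ Icc a b, (∀ x ∈ Ioo a t, φ x ≤ 0) ∧ ∀ x ∈ Ioo t b, 0 ≤ φ x := by
  set S := insert a {x ∈ Icc a b | φ x ≤ 0}
  have hSb : ∀ x ∈ S, x ≤ b := by
    rintro x (rfl | hx)
    exacts [hab, hx.1.2]
  have haS : a ∈ S := mem_insert a _
  have haT : a ≤ sSup S := le_csSup ⟨b, hSb⟩ haS
  refine ⟨sSup S, ⟨haT, csSup_le ⟨a, haS⟩ hSb⟩, fun x hx ↦ ?_, fun x hx ↦ ?_⟩
  · obtain ⟨s, hs, hxs⟩ := exists_lt_of_lt_csSup ⟨a, haS⟩ hx.2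
    rcases hs with rfl | hs
    · exact absurd hx.1 hxs.not_gt
    · exact (hφ ⟨hx.1.le, hxs.le.trans hs.1.2⟩ hs.1 hxs.le).trans hs.2
  · by_contra! h
    exact hx.1.not_ge (le_csSup ⟨b, hSb⟩ (Or.inr ⟨⟨haT.trans hx.1.le, hx.2.le⟩, h.le⟩))

noncomputable def trialCost (r a x : ℝ) : ℝ := (r + x) * (1 - exp (-(a / x)))

noncomputable def trialCostDeriv (r a x : ℝ) : ℝ :=
  1 - exp (-(a / x)) - (r + x) * (a / x ^ 2) * exp (-(a / x))

section trialCost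

variable {r a x : ℝ}

lemma hasDerivAt_exp_neg_div (hx : x ≠ 0) :
    HasDerivAt (fun y ↦ exp (-(a / y))) (a / x ^ 2 * exp (-(a / x))) x := by
  refine (((hasDerivAt_inv hx).const_mul a).neg.exp).congr_deriv ?_
  simp only [Pi.neg_apply]
  field_simp

lemma hasDerivAt_trialCost (hx : x ≠ 0) : HasDerivAt (trialCost r a) (trialCostDeriv r a x) x := by
  refine (((hasDerivAt_id' x).const_add r).mul
    ((hasDerivAt_exp_neg_div hx).const_sub 1)).congr_deriv ?_
  simp only [trialCostDeriv]
  ring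

lemma hasDerivAt_trialCostDeriv (hx : x ≠ 0) :
    HasDerivAt (trialCostDeriv r a)
      (exp (-(a / x)) * (a / x ^ 4) * (2 * r * x - a * (r + x))) x := by
  have hw : HasDerivAt (fun y ↦ a / y ^ 2) (a * (-(2 * x ^ 1) / (x ^ 2) ^ 2)) x :=
    ((hasDerivAt_pow 2 x).inv (pow_ne_zero 2 hx)).const_mul a
  refine (((hasDerivAt_exp_neg_div hx).const_sub 1).sub
    ((((hasDerivAt_id' x).const_add r).mul hw).mul (hasDerivAt_exp_neg_div hx))).congr_deriv ?_
  simp only [Pi.mul_apply]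
  field_simp
  ring

lemma trialCostDeriv_neg (hr : 0 < r) (ha : 0 < a) (hx : 0 < x) (h : a * (r + x) ≤ 2 * r * x) :
    trialCostDeriv r a x < 0 := by
  obtain ⟨u, rfl⟩ : ∃ u, a = u * x := ⟨a / x, (div_mul_cancel₀ a hx.ne').symm⟩
  have hu : 0 < u := pos_of_mul_pos_left ha hx.le
  have hux_le : u * x ≤ r * (2 - u) := by nlinarith
  have hexp := two_sub_mul_exp_lt_two_add hu
  have hexp_ge : 0 ≤ exp u - 1 - u := by linarith [add_one_le_exp u]
  have key : x * (exp u - 1) < (r + x) * u := by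
    nlinarith [mul_le_mul_of_nonneg_right hux_le hexp_ge]
  have hdecomp : trialCostDeriv r (u * x) x = exp (-u) / x * (x * (exp u - 1) - (r + x) * u) := by
    rw [trialCostDeriv, mul_div_cancel_right₀ u hx.ne', exp_neg]
    field_simp
  rw [hdecomp]
  exact mul_neg_of_pos_of_neg (by positivity) (by linarith)

lemma antitoneOn_trialCost {b c : ℝ} (hr : 0 < r) (ha : 0 < a) (hb : 0 < b)
    (h : ∀ x ∈ Ioo b c, a * (r + x) ≤ 2 * r * x) : AntitoneOn (trialCost r a) (Icc b c) := by
  refine antitoneOn_of_hasDerivWithinAt_nonpos (f' := trialCostDeriv r a) (convex_Icc b c)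
    (fun x hx ↦ (hasDerivAt_trialCost (hb.trans_le hx.1).ne').continuousAt.continuousWithinAt)
    (fun x hx ↦ ?_) (fun x hx ↦ ?_)
  all_goals rw [interior_Icc] at hx
  · exact (hasDerivAt_trialCost (hb.trans hx.1).ne').hasDerivWithinAt
  · exact (trialCostDeriv_neg hr ha (hb.trans hx.1) (h x hx)).le

lemma concaveOn_trialCost {b c : ℝ} (ha : 0 ≤ a) (hb : 0 < b)
    (h : ∀ x ∈ Ioo b c, 2 * r * x ≤ a * (r + x)) : ConcaveOn ℝ (Icc b c) (trialCost r a) := by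
  refine concaveOn_of_hasDerivWithinAt2_nonpos (f' := trialCostDeriv r a)
    (f'' := fun x ↦ exp (-(a / x)) * (a / x ^ 4) * (2 * r * x - a * (r + x))) (convex_Icc b c)
    (fun x hx ↦ (hasDerivAt_trialCost (hb.trans_le hx.1).ne').continuousAt.continuousWithinAt)
    (fun x hx ↦ ?_) (fun x hx ↦ ?_) (fun x hx ↦ ?_)
  all_goals rw [interior_Icc] at hx
  · exact (hasDerivAt_trialCost (hb.trans hx.1).ne').hasDerivWithinAt
  · exact (hasDerivAt_trialCostDeriv (hb.trans hx.1).ne').hasDerivWithinAt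
  · exact mul_nonpos_of_nonneg_of_nonpos (by positivity) (by linarith [h x hx])

lemma min_trialCost_le {b c : ℝ} (hr : 0 < r) (ha : 0 < a) (hb : 0 < b) (hx : x ∈ Icc b c) :
    min (trialCost r a b) (trialCost r a c) ≤ trialCost r a x := by
  have hmono : MonotoneOn (fun x ↦ 2 * r - a - a * r / x) (Icc b c) := fun x hx _ _ hxy ↦
    sub_le_sub_left (div_le_div_of_nonneg_left (by positivity) (hb.trans_le hx.1) hxy) _
  obtain ⟨t, ht, hleft, hright⟩ := hmono.exists_nonpos_nonneg (hx.1.trans hx.2)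
  refine min_le_of_concaveOn_of_antitoneOn ht.1 ht.2 (concaveOn_trialCost ha.le hb fun y hy ↦ ?_)
    (antitoneOn_trialCost hr ha (hb.trans_le ht.1) fun y hy ↦ ?_) hx
  · have hy0 : 0 < y := hb.trans hy.1
    have := mul_nonpos_of_nonneg_of_nonpos hy0.le (hleft y hy)
    field_simp at this
    linarith
  · have hy0 : 0 < y := (hb.trans_le ht.1).trans hy.1
    have := mul_nonneg hy0.le (hright y hy)
    field_simp at this
    linarith

end trialCost

theorem ace_min_at_endpoints_general (p r T : ℝ) (hp0 : 0 < p) (hp1 : p < 1)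
    (hr : 0 < r)
    (f : ℝ → ℝ) (hf : ∀ β, f β = (r + β) * (1 - (1 - p) ^ (T / β)) / p) :
    ∀ β ∈ Set.Icc (1 : ℝ) T, min (f 1) (f T) ≤ f β := by
  intro β hβ
  set a := -(T * log (1 - p)) with ha_def
  have ha : 0 < a := neg_pos.2 (mul_neg_of_pos_of_neg (by linarith [hβ.1.trans hβ.2])
    (log_neg (by linarith) (by linarith)))
  have hfa (x : ℝ) : f x = trialCost r a x / p := by
    rw [hf, trialCost, rpow_def_of_pos (by linarith), ha_def]
    ring_nf
  rw [hfa, hfa, hfa, min_div_div_right hp0.le]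
  exact div_le_div_of_nonneg_right (min_trialCost_le hr ha one_pos hβ) hp0.le

/-- The minimum of `f β = (r + β) * (1 - (1-p)^(T/β)) / p` over the interval
`[1, T]` is attained at one of the endpoints `β = 1` or `β = T`. -/
theorem ace_min_at_endpoints (p r T : ℝ) (hp0 : 0 < p) (hp1 : p < 1)
    (hr : 0 < r) (hT : 1 < T)
    (f : ℝ → ℝ) (hf : ∀ β, f β = (r + β) * (1 - (1 - p) ^ (T / β)) / p) :
    ∀ β ∈ Set.Icc (1 : ℝ) T, min (f 1) (f T) ≤ f β :=
  ace_min_at_endpoints_general p r T hp0 hp1 hr f hf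
end

section
/- Let p ∈ (0,1), let r > 0, and let T > 1 be a real number. Define f(β) = (r + β)·(1 − (1−p)^{T/β})/p and set ρ = (pT + (1−p)^T − 1)/(1 − p − (1−p)^T). Then f(1) < f(T) if and only if r < ρ; equivalently, (r+1)·(1 − (1−p)^T) < (r+T)·p if and only if r < ρ. Likewise, f(1) = f(T) if and only if r = ρ, and f(1) > f(T) if and only if r > ρ. -/
/-!
At `β = T` the exponent `T / β` is `1`, so `f T = r + T`, while `f 1 = (r + 1)(1 - q)/p` with
`q = (1 - p)^T`. Clearing denominators, `p (f T - f 1) = (1 - p - q)(ρ - r)`, and `1 - p - q > 0`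
because `q < 1 - p` for `0 < 1 - p < 1 < T`. Hence `f T - f 1` has the sign of `ρ - r`.
-/

section EndpointGap

variable {p q r T : ℝ}

lemma endpoint_gap_eq (hD : 1 - p - q ≠ 0) :
    (r + T) * p - (r + 1) * (1 - q) = (1 - p - q) * ((p * T + q - 1) / (1 - p - q) - r) := by
  field_simp
  ring

lemma endpoint_lt_iff (hD : 0 < 1 - p - q) :
    (r + 1) * (1 - q) < (r + T) * p ↔ r < (p * T + q - 1) / (1 - p - q) := by
  rw [← sub_pos, endpoint_gap_eq hD.ne', mul_pos_iff_of_pos_left hD, sub_pos]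

lemma endpoint_gt_iff (hD : 0 < 1 - p - q) :
    (r + T) * p < (r + 1) * (1 - q) ↔ (p * T + q - 1) / (1 - p - q) < r := by
  rw [← sub_neg, endpoint_gap_eq hD.ne', ← mul_zero (1 - p - q), mul_lt_mul_iff_of_pos_left hD,
    sub_neg]

lemma endpoint_eq_iff (hD : 0 < 1 - p - q) :
    (r + 1) * (1 - q) = (r + T) * p ↔ r = (p * T + q - 1) / (1 - p - q) := by
  rw [eq_comm, ← sub_eq_zero, endpoint_gap_eq hD.ne', mul_eq_zero_iff_left hD.ne', sub_eq_zero,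
    eq_comm]

end EndpointGap

lemma expectedCost_at_horizon {p r T : ℝ} (hp : p ≠ 0) (hT : T ≠ 0) :
    (r + T) * (1 - (1 - p) ^ (T / T)) / p = r + T := by
  rw [div_self hT, Real.rpow_one, sub_sub_cancel, mul_div_assoc, div_self hp, mul_one]

theorem ace_endpoint_comparison_general (p r T : ℝ) (hp0 : 0 < p) (hp1 : p < 1)
    (hT : 1 < T)
    (f : ℝ → ℝ) (hf : ∀ β, f β = (r + β) * (1 - (1 - p) ^ (T / β)) / p)
    (ρ : ℝ) (hρ : ρ = (p * T + (1 - p) ^ T - 1) / (1 - p - (1 - p) ^ T)) :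
    (f 1 < f T ↔ r < ρ) ∧
    ((r + 1) * (1 - (1 - p) ^ T) < (r + T) * p ↔ r < ρ) ∧
    (f 1 = f T ↔ r = ρ) ∧
    (f T < f 1 ↔ ρ < r) := by
  have hD : 0 < 1 - p - (1 - p) ^ T :=
    sub_pos.2 (Real.rpow_lt_self_of_lt_one (by linarith) (by linarith) hT)
  have hf1 : f 1 = (r + 1) * (1 - (1 - p) ^ T) / p := by rw [hf, div_one]
  have hfT : f T = r + T := by rw [hf, expectedCost_at_horizon hp0.ne' (by linarith)]
  subst hρ
  rw [hf1, hfT, div_lt_iff₀ hp0, lt_div_iff₀ hp0, div_eq_iff hp0.ne']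
  exact ⟨endpoint_lt_iff hD, endpoint_lt_iff hD, endpoint_eq_iff hD, endpoint_gt_iff hD⟩

/-- Comparison of the endpoint values of `f β = (r + β)*(1 - (1-p)^(T/β))/p`:
with `ρ = (p*T + (1-p)^T - 1)/(1 - p - (1-p)^T)`, we have `f 1 < f T ↔ r < ρ`
(equivalently `(r+1)*(1-(1-p)^T) < (r+T)*p ↔ r < ρ`), `f 1 = f T ↔ r = ρ`, and
`f 1 > f T ↔ r > ρ`. -/
theorem ace_endpoint_comparison (p r T : ℝ) (hp0 : 0 < p) (hp1 : p < 1)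
    (hr : 0 < r) (hT : 1 < T)
    (f : ℝ → ℝ) (hf : ∀ β, f β = (r + β) * (1 - (1 - p) ^ (T / β)) / p)
    (ρ : ℝ) (hρ : ρ = (p * T + (1 - p) ^ T - 1) / (1 - p - (1 - p) ^ T)) :
    (f 1 < f T ↔ r < ρ) ∧
    ((r + 1) * (1 - (1 - p) ^ T) < (r + T) * p ↔ r < ρ) ∧
    (f 1 = f T ↔ r = ρ) ∧
    (f T < f 1 ↔ ρ < r) :=
  ace_endpoint_comparison_general p r T hp0 hp1 hT f hf ρ hρ
end

section
/- Let s > 1 be a real number and define g(β) = −(β·ln s − β²·s^{1/β} + β²)/ln s for β > 0. Then g is strictly decreasing on (0, ∞); in particular its derivative satisfies g′(β) = ((2·s^{1/β} − 2)·β − s^{1/β}·ln s − ln s)/ln s < 0 for all β > 0. -/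
/-!
With `x = log s / β`, so that `s ^ (1 / β) = exp x` and `log s = x β`, the numerator of `g'`
is `β (2 (exp x - 1) - x (exp x + 1))`, negative by the inequality `tanh (x / 2) < x / 2`
for `x > 0`.
-/

open Real

lemma one_sub_mul_exp_lt_one {x : ℝ} (hx : x ≠ 0) : (1 - x) * exp x < 1 := by
  have h := mul_lt_mul_of_pos_right (one_sub_lt_exp_neg hx) (exp_pos x)
  rwa [← exp_add, neg_add_cancel, exp_zero] at h

lemma two_mul_exp_sub_one_lt_mul_exp_add_one {x : ℝ} (hx : 0 < x) :
    2 * (exp x - 1) < x * (exp x + 1) := by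
  let h : ℝ → ℝ := fun y => y * (exp y + 1) - 2 * (exp y - 1)
  have hderiv (y : ℝ) : HasDerivAt h ((y - 1) * exp y + 1) y := by
    refine (((hasDerivAt_id' y).mul ((hasDerivAt_exp y).add_const 1)).sub
      (((hasDerivAt_exp y).sub_const 1).const_mul 2)).congr_deriv ?_
    ring
  have hmono : StrictMonoOn h (Set.Ici 0) := by
    refine strictMonoOn_of_deriv_pos (convex_Ici 0)
      (HasDerivAt.continuousOn fun y _ => hderiv y) fun y hy => ?_
    rw [interior_Ici] at hy
    rw [(hderiv y).deriv]
    linarith [one_sub_mul_exp_lt_one hy.ne']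
  have hpos := hmono Set.self_mem_Ici hx.le hx
  simp only [h, exp_zero] at hpos
  linarith

lemma hasDerivAt_ace_g {s β : ℝ} (hs : 0 < s) (hβ : β ≠ 0) :
    HasDerivAt (fun β => -(β * log s - β ^ 2 * s ^ (1 / β) + β ^ 2) / log s)
      (((2 * s ^ (1 / β) - 2) * β - s ^ (1 / β) * log s - log s) / log s) β := by
  have hinv : HasDerivAt (fun β : ℝ => 1 / β) (-(β ^ 2)⁻¹) β := by
    simpa only [one_div] using hasDerivAt_inv hβ
  have hsq : HasDerivAt (fun β : ℝ => β ^ 2) (2 * β) β := by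
    simpa using hasDerivAt_pow 2 β
  refine ((((hasDerivAt_id' β).mul_const (log s)).sub
    (hsq.mul (hinv.const_rpow hs))).add hsq).neg.div_const (log s) |>.congr_deriv ?_
  field_simp
  ring

lemma ace_g_numerator_neg {s β : ℝ} (hs : 1 < s) (hβ : 0 < β) :
    (2 * s ^ (1 / β) - 2) * β - s ^ (1 / β) * log s - log s < 0 := by
  set x := log s / β with hx
  have hx0 : 0 < x := div_pos (log_pos hs) hβ
  have hexp : s ^ (1 / β) = exp x := by
    rw [rpow_def_of_pos (by linarith), hx, mul_one_div]
  have hlog : log s = x * β := by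
    rw [hx, div_mul_cancel₀ _ hβ.ne']
  rw [hexp, hlog]
  nlinarith [two_mul_exp_sub_one_lt_mul_exp_add_one hx0]

/-- For `s > 1`, the function `g β = -(β * log s - β^2 * s^(1/β) + β^2)/log s`
is strictly decreasing on `(0, ∞)`; in particular its derivative equals
`((2*s^(1/β) - 2)*β - s^(1/β)*log s - log s)/log s`, which is negative for all
`β > 0`. -/
theorem ace_g_strict_anti (s : ℝ) (hs : 1 < s)
    (g : ℝ → ℝ)
    (hg : ∀ β, g β =
      -(β * Real.log s - β ^ 2 * s ^ (1 / β) + β ^ 2) / Real.log s) :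
    StrictAntiOn g (Set.Ioi (0 : ℝ)) ∧
    ∀ β : ℝ, 0 < β →
      deriv g β =
        ((2 * s ^ (1 / β) - 2) * β - s ^ (1 / β) * Real.log s - Real.log s) /
          Real.log s ∧
      deriv g β < 0 := by
  obtain rfl : g = _ := funext hg
  have hderiv (β : ℝ) (hβ : 0 < β) := hasDerivAt_ace_g (zero_lt_one.trans hs) hβ.ne'
  have hneg (β : ℝ) (hβ : 0 < β) :=
    div_neg_of_neg_of_pos (ace_g_numerator_neg hs hβ) (log_pos hs)
  refine ⟨strictAntiOn_of_deriv_neg (convex_Ioi 0) (HasDerivAt.continuousOn hderiv) ?_,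
    fun β hβ => ⟨(hderiv β hβ).deriv, (hderiv β hβ).deriv ▸ hneg β hβ⟩⟩
  intro β hβ
  rw [interior_Ioi] at hβ
  exact (hderiv β hβ).deriv ▸ hneg β hβ
end

section
/- Let β > 0 be a real number and define h(s) = (2·s^{1/β} − 2)·β − s^{1/β}·ln s − ln s for s ≥ 1. Then h(1) = 0 and h(s) < 0 for every s > 1. -/
open Real Finset

/- With `t = s ^ (1 / β)` we have `log s = β * log t`, so `h s = β * (2 * (t - 1) - (t + 1) * log t)`.
The bracket is negative for `t > 1`: the series `log t = 2 * ∑ x ^ (2k+1) / (2k+1)` with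
`x = (t - 1) / (t + 1)` has positive terms, so `log t` exceeds its first term `2 * x`. -/

theorem two_mul_div_add_one_lt_log {t : ℝ} (ht : 1 < t) : 2 * ((t - 1) / (t + 1)) < log t := by
  have hsum := hasSum_log_one_add_inv (inv_pos.2 (sub_pos.2 ht))
  have hx : 1 / (2 * (t - 1)⁻¹ + 1) = (t - 1) / (t + 1) := by
    have : t - 1 ≠ 0 := by linarith
    rw [div_eq_div_iff (by positivity) (by linarith)]
    field_simp
    ring
  rw [inv_inv, add_sub_cancel, hx] at hsum
  have hx_pos : 0 < (t - 1) / (t + 1) := div_pos (by linarith) (by linarith)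
  have two_terms_le := sum_le_hasSum (range 2) (fun k _ => by positivity) hsum
  norm_num [sum_range_succ] at two_terms_le
  nlinarith [pow_pos hx_pos 3]

theorem two_mul_sub_one_lt_add_one_mul_log {t : ℝ} (ht : 1 < t) :
    2 * (t - 1) < (t + 1) * log t := by
  have h := two_mul_div_add_one_lt_log ht
  rw [mul_div_assoc', div_lt_iff₀ (by linarith)] at h
  linarith

/-- For `β > 0` and `h s = (2*s^(1/β) - 2)*β - s^(1/β)*log s - log s`, we have
`h 1 = 0` and `h s < 0` for every `s > 1`. -/
theorem ace_h_neg (β : ℝ) (hβ : 0 < β)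
    (h : ℝ → ℝ)
    (hh : ∀ s, h s =
      (2 * s ^ (1 / β) - 2) * β - s ^ (1 / β) * Real.log s - Real.log s) :
    h 1 = 0 ∧ ∀ s : ℝ, 1 < s → h s < 0 := by
  refine ⟨by simp [hh], fun s hs => ?_⟩
  have hs0 : 0 < s := by linarith
  set t := s ^ (1 / β)
  have ht : 1 < t := one_lt_rpow hs (by positivity)
  have hlog : log s = β * log t := by
    rw [log_rpow hs0]
    field_simp
  have key := two_mul_sub_one_lt_add_one_mul_log ht
  rw [hh, hlog]
  nlinarith
end

section
/- Let p ∈ (0,1), let r > 0, let T > 1 be a real number, set s = (1−p)^{−T} (so s > 1), and define f(β) = (r + β)·(1 − s^{−1/β})/p for β ∈ [1, T]. Suppose there exists β₀ ∈ [1, T] with f′(β₀) = 0. Then for every β₁ with 1 ≤ β₁ < β₀ one has f′(β₁) > 0, and for every β₂ with β₀ < β₂ ≤ T one has f′(β₂) < 0. -/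
/-!
With `L = log s > 0` and `x = L / β`, the derivative factors as
`f′ β = e^{-x} x² / p · (g x - r / L)` where `g x = (eˣ - 1 - x) / x²`.
Since `g` is strictly increasing on `(0, ∞)` and `x` is strictly decreasing in `β`, the sign of
`f′` is that of a strictly decreasing function of `β`, which vanishes at `β₀`.
-/

open Real Set

noncomputable def expRemainderQuot (x : ℝ) : ℝ := (exp x - 1 - x) / x ^ 2

lemma sub_one_mul_exp_add_one_pos {x : ℝ} (hx : x ≠ 0) : 0 < (x - 1) * exp x + 1 := by
  have h := one_sub_lt_exp_neg hx
  have hprod : exp (-x) * exp x = 1 := by rw [← exp_add, neg_add_cancel, exp_zero]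
  nlinarith [exp_pos x]

lemma sub_two_mul_exp_add_pos {x : ℝ} (hx : 0 < x) : 0 < (x - 2) * exp x + x + 2 := by
  have hderiv (y : ℝ) :
      HasDerivAt (fun y => (y - 2) * exp y + y + 2) ((y - 1) * exp y + 1) y := by
    have h := ((((hasDerivAt_id' y).sub_const 2).mul (hasDerivAt_exp y)).add
      (hasDerivAt_id' y)).add_const 2
    exact h.congr_deriv (by ring)
  have hmono : StrictMonoOn (fun y => (y - 2) * exp y + y + 2) (Ici 0) :=
    strictMonoOn_of_deriv_pos (convex_Ici 0) (by fun_prop) fun y hy => by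
      rw [interior_Ici] at hy
      exact (hderiv y).deriv ▸ sub_one_mul_exp_add_one_pos hy.ne'
  simpa using hmono self_mem_Ici hx.le hx

lemma hasDerivAt_expRemainderQuot {x : ℝ} (hx : x ≠ 0) :
    HasDerivAt expRemainderQuot (((x - 2) * exp x + x + 2) / x ^ 3) x := by
  have h := (((hasDerivAt_exp x).sub_const 1).fun_sub (hasDerivAt_id' x)).fun_div
    (hasDerivAt_pow 2 x) (pow_ne_zero 2 hx)
  refine h.congr_deriv ?_
  field_simp
  ring

lemma strictMonoOn_expRemainderQuot : StrictMonoOn expRemainderQuot (Ioi 0) :=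
  strictMonoOn_of_deriv_pos (convex_Ioi 0)
    (fun x hx => (hasDerivAt_expRemainderQuot hx.ne').continuousAt.continuousWithinAt)
    fun x hx => by
      rw [interior_Ioi] at hx
      rw [(hasDerivAt_expRemainderQuot hx.ne').deriv]
      exact div_pos (sub_two_mul_exp_add_pos hx) (pow_pos hx 3)

lemma strictAntiOn_expRemainderQuot_div {L : ℝ} (hL : 0 < L) :
    StrictAntiOn (fun β => expRemainderQuot (L / β)) (Ioi 0) :=
  fun _ ha _ hb hab => strictMonoOn_expRemainderQuot (div_pos hL hb) (div_pos hL ha)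
    (div_lt_div_of_pos_left hL ha hab)

noncomputable def aceDeriv (s r p β : ℝ) : ℝ :=
  (1 - s ^ (-1 / β)) / p - log s * (β + r) / (p * s ^ (1 / β) * β ^ 2)

lemma hasDerivAt_ace {s r p β : ℝ} (hs : 0 < s) (hβ : β ≠ 0) :
    HasDerivAt (fun b => (r + b) * (1 - s ^ (-1 / b)) / p) (aceDeriv s r p β) β := by
  have hinv : HasDerivAt (fun b : ℝ => -1 / b) (1 / β ^ 2) β := by
    simpa [neg_div, one_div] using (hasDerivAt_inv hβ).fun_neg
  have h := (((hasDerivAt_id' β).const_add r).fun_mul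
    ((hinv.const_rpow hs).const_sub 1)).div_const p
  refine h.congr_deriv ?_
  rw [aceDeriv, neg_div, rpow_neg hs.le]
  have := rpow_pos_of_pos hs (1 / β)
  field_simp
  ring

lemma aceDeriv_eq_mul_expRemainderQuot {s r p β : ℝ} (hs : 0 < s) (hL : log s ≠ 0)
    (hβ : β ≠ 0) :
    aceDeriv s r p β =
      exp (-(log s / β)) / p * (log s / β) ^ 2 * (expRemainderQuot (log s / β) - r / log s) := by
  rw [aceDeriv, rpow_def_of_pos hs, rpow_def_of_pos hs, expRemainderQuot, exp_neg,
    show log s * (-1 / β) = -(log s / β) by ring, show log s * (1 / β) = log s / β by ring,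
    exp_neg]
  have := exp_pos (log s / β)
  field_simp
  ring

theorem ace_deriv_sign_general (p r T s : ℝ) (hp0 : 0 < p) (hp1 : p < 1)
    (hs : s = (1 - p) ^ (-T))
    (f : ℝ → ℝ) (hf : ∀ β, f β = (r + β) * (1 - s ^ (-1 / β)) / p)
    (β₀ : ℝ) (hβ₀ : β₀ ∈ Set.Icc (1 : ℝ) T) (hcrit : deriv f β₀ = 0) :
    (∀ β₁ : ℝ, 1 ≤ β₁ → β₁ < β₀ → 0 < deriv f β₁) ∧
    (∀ β₂ : ℝ, β₀ < β₂ → β₂ ≤ T → deriv f β₂ < 0) := by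
  have hsp : 0 < s := hs ▸ rpow_pos_of_pos (by linarith) _
  have hL : 0 < log s := by
    rw [hs, log_rpow (by linarith)]
    exact mul_pos_of_neg_of_neg (by linarith [hβ₀.1, hβ₀.2]) (log_neg (by linarith) (by linarith))
  set L := log s
  have hderiv (β : ℝ) (hβ : 0 < β) :
      deriv f β = exp (-(L / β)) / p * (L / β) ^ 2 * (expRemainderQuot (L / β) - r / L) := by
    rw [funext hf, (hasDerivAt_ace hsp hβ.ne').deriv,
      aceDeriv_eq_mul_expRemainderQuot hsp hL.ne' hβ.ne']
  have hweight (β : ℝ) (hβ : 0 < β) : 0 < exp (-(L / β)) / p * (L / β) ^ 2 := by positivity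
  have hβ₀pos : 0 < β₀ := by linarith [hβ₀.1]
  have hβ₀crit : expRemainderQuot (L / β₀) = r / L := by
    rw [hderiv β₀ hβ₀pos] at hcrit
    exact sub_eq_zero.1 ((mul_eq_zero.1 hcrit).resolve_left (hweight β₀ hβ₀pos).ne')
  have hanti := strictAntiOn_expRemainderQuot_div hL
  refine ⟨fun β₁ h1 h10 => ?_, fun β₂ h02 _ => ?_⟩
  · have hβ₁ : 0 < β₁ := by linarith
    rw [hderiv β₁ hβ₁]
    exact mul_pos (hweight β₁ hβ₁) (sub_pos.2 (hβ₀crit ▸ hanti hβ₁ hβ₀pos h10))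
  · have hβ₂ : 0 < β₂ := by linarith
    rw [hderiv β₂ hβ₂]
    exact mul_neg_of_pos_of_neg (hweight β₂ hβ₂) (sub_neg.2 (hβ₀crit ▸ hanti hβ₀pos hβ₂ h02))

/-- For `s = (1-p)^(-T) > 1` and `f β = (r + β)*(1 - s^(-1/β))/p` on `[1, T]`,
if `f′ β₀ = 0` for some `β₀ ∈ [1, T]`, then `f′ β₁ > 0` for every `β₁` with
`1 ≤ β₁ < β₀` and `f′ β₂ < 0` for every `β₂` with `β₀ < β₂ ≤ T`. -/
theorem ace_deriv_sign (p r T s : ℝ) (hp0 : 0 < p) (hp1 : p < 1)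
    (hr : 0 < r) (hT : 1 < T) (hs : s = (1 - p) ^ (-T))
    (f : ℝ → ℝ) (hf : ∀ β, f β = (r + β) * (1 - s ^ (-1 / β)) / p)
    (β₀ : ℝ) (hβ₀ : β₀ ∈ Set.Icc (1 : ℝ) T) (hcrit : deriv f β₀ = 0) :
    (∀ β₁ : ℝ, 1 ≤ β₁ → β₁ < β₀ → 0 < deriv f β₁) ∧
    (∀ β₂ : ℝ, β₀ < β₂ → β₂ ≤ T → deriv f β₂ < 0) :=
  ace_deriv_sign_general p r T s hp0 hp1 hs f hf β₀ hβ₀ hcrit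
end
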